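/- arXiv:1801.09028 — 3 statements merged into one kernel-verified Lean document; each statement's English description precedes it below -/
import Mathlib

section
/- Let n be a positive integer and w : {-1,1}^n → [0,∞) a weight function with nonempty support. For all real λ > 0 and γ > 0 with λγ ≤ 1, writing w^γ for the weight function x ↦ w(x)^γ (whose support equals that of w), one has R(w^γ) ≤ (1/λ)·log₂ Z(w) + ((λγ − 1)/λ)·log₂ w_min + λn/2. -/
open Finset

/-- Map a boolean to the corresponding element of `{-1, 1} ⊆ ℝ`. -/
noncomputable def sgn (b : Bool) : ℝ := if b then 1 else -1

/-- Standard inner product on `ℝ^ι` restricted to the cube `{-1,1}^ι`. -/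
noncomputable def ip {ι : Type*} [Fintype ι] [DecidableEq ι] (c x : ι → Bool) : ℝ :=
  ∑ i, sgn (c i) * sgn (x i)

/-- `δ(c, w)`: the maximum over the support of `w` of `⟨c,x⟩ + log₂ w(x)`. -/
noncomputable def wdelta {ι : Type*} [Fintype ι] [DecidableEq ι] (c : ι → Bool) (w : (ι → Bool) → ℝ) : ℝ :=
  sSup {y : ℝ | ∃ x, 0 < w x ∧ y = ip c x + Real.logb 2 (w x)}

/-- The weighted Rademacher complexity `R(w) = E_c[δ(c,w)]`, `c` uniform on the cube. -/
noncomputable def wRad {ι : Type*} [Fintype ι] [DecidableEq ι] (w : (ι → Bool) → ℝ) : ℝ :=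
  (∑ c : ι → Bool, wdelta c w) / 2 ^ (Fintype.card ι)

/-- `Z(w)`: the total weight. -/
noncomputable def Zw {ι : Type*} [Fintype ι] [DecidableEq ι] (w : (ι → Bool) → ℝ) : ℝ := ∑ x, w x

/-- `w_min`: the smallest positive weight. -/
noncomputable def wmin {ι : Type*} [Fintype ι] [DecidableEq ι] (w : (ι → Bool) → ℝ) : ℝ :=
  sInf {y : ℝ | ∃ x, 0 < w x ∧ y = w x}

/-- `w_max`: the largest weight. -/
noncomputable def wmax {ι : Type*} [Fintype ι] [DecidableEq ι] (w : (ι → Bool) → ℝ) : ℝ :=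
  sSup {y : ℝ | ∃ x, y = w x}

/-! For each `c`, every point `x` of the support satisfies
`λ⟨c,x⟩ + log₂ w(x) ≤ log₂ S(c)`, where `S(c) = Σ_x w(x) 2^{λ⟨c,x⟩}` is the total mass of the
tilted weight; since `λγ ≤ 1`, the remaining term `(λγ - 1) log₂ w(x)` is at most
`(λγ - 1) log₂ w_min`. Hence `δ(c, w^γ) ≤ (log₂ S(c) + (λγ - 1) log₂ w_min) / λ`. Averaging over `c`,
Jensen for the concave `log₂` gives `E_c log₂ S(c) ≤ log₂ E_c S(c) = log₂ Z(w) + n log₂ cosh(λ ln 2)`,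
and `cosh u ≤ exp (u² / 2)` bounds the last term by `nλ²/2`. -/

open Real
open scoped BigOperators

lemma expect_logb_le_logb_expect {κ : Type*} [Fintype κ] [Nonempty κ] {b : ℝ} (hb : 1 < b)
    {f : κ → ℝ} (hf : ∀ i, 0 < f i) : 𝔼 i, logb b (f i) ≤ logb b (𝔼 i, f i) := by
  have hjensen := strictConcaveOn_log_Ioi.concaveOn.le_map_sum (t := univ)
    (w := fun _ => ((Fintype.card κ : ℝ))⁻¹) (p := f) (fun _ _ => by positivity)
    (by simp [card_univ]) (fun i _ => hf i)
  simp only [logb, ← expect_div]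
  rw [div_le_div_iff_of_pos_right (log_pos hb)]
  simpa [Fintype.expect_eq_sum_div_card, ← mul_sum, inv_mul_eq_div, sum_div] using hjensen

lemma finite_positive_values {α : Type*} [Finite α] (w : α → ℝ) :
    {y : ℝ | ∃ x, 0 < w x ∧ y = w x}.Finite :=
  (Set.finite_range w).subset fun _ ⟨x, _, hy⟩ => ⟨x, hy.symm⟩

section Cube

variable {ι : Type*} [Fintype ι] [DecidableEq ι]

lemma wRad_eq_expect (w : (ι → Bool) → ℝ) : wRad w = 𝔼 c, wdelta c w := by
  simp [wRad, Fintype.expect_eq_sum_div_card]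

lemma sum_rpow_mul_ip {b : ℝ} (hb : 0 < b) (t : ℝ) (x : ι → Bool) :
    ∑ c : ι → Bool, b ^ (t * ip c x) = (b ^ t + b ^ (-t)) ^ Fintype.card ι := by
  have hsgn : ∀ a : Bool, ∑ c : Bool, b ^ (t * (sgn c * sgn a)) = b ^ t + b ^ (-t) := by
    intro a; cases a <;> simp [sgn, add_comm]
  simp only [ip, mul_sum, rpow_sum_of_pos hb]
  rw [← Fintype.prod_sum (fun i (c : Bool) => b ^ (t * (sgn c * sgn (x i))))]
  simp only [hsgn, prod_const, card_univ]

lemma logb_two_rpow_add_rpow_neg_div_two_le (t : ℝ) :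
    logb 2 ((2 ^ t + 2 ^ (-t)) / 2) ≤ t ^ 2 / 2 := by
  have hlog2 : log 2 ≤ 1 := by linarith [log_le_sub_one_of_pos (zero_lt_two' ℝ)]
  have hcosh : (2 ^ t + 2 ^ (-t)) / 2 = cosh (t * log 2) := by
    rw [cosh_eq, rpow_def_of_pos two_pos, rpow_def_of_pos two_pos]
    ring_nf
  rw [hcosh, logb, div_le_iff₀ (log_pos one_lt_two)]
  calc log (cosh (t * log 2)) ≤ (t * log 2) ^ 2 / 2 := by
        simpa using log_le_log (cosh_pos _) (cosh_le_exp_half_sq (t * log 2))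
    _ = t ^ 2 / 2 * log 2 * log 2 := by ring
    _ ≤ t ^ 2 / 2 * log 2 := mul_le_of_le_one_right (by positivity) hlog2

lemma wmin_pos {w : (ι → Bool) → ℝ} (hsupp : ∃ x, 0 < w x) : 0 < wmin w := by
  obtain ⟨x₀, hx₀⟩ := hsupp
  have hne : {y : ℝ | ∃ x, 0 < w x ∧ y = w x}.Nonempty := ⟨w x₀, x₀, hx₀, rfl⟩
  obtain ⟨x, hx, hmin⟩ := hne.csInf_mem (finite_positive_values w)
  rw [wmin, hmin]
  exact hx

lemma wmin_le {w : (ι → Bool) → ℝ} {x : ι → Bool} (hx : 0 < w x) : wmin w ≤ w x :=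
  csInf_le (finite_positive_values w).bddBelow ⟨x, hx, rfl⟩

lemma Zw_pos {w : (ι → Bool) → ℝ} (hw : ∀ x, 0 ≤ w x) (hsupp : ∃ x, 0 < w x) : 0 < Zw w := by
  obtain ⟨x, hx⟩ := hsupp
  exact sum_pos' (fun y _ => hw y) ⟨x, mem_univ x, hx⟩

lemma logb_le_logb_Zw {w : (ι → Bool) → ℝ} (hw : ∀ x, 0 ≤ w x) {x : ι → Bool} (hx : 0 < w x) :
    logb 2 (w x) ≤ logb 2 (Zw w) :=
  logb_le_logb_of_le one_lt_two hx (single_le_sum (fun y _ => hw y) (mem_univ x))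

lemma wdelta_le {c : ι → Bool} {w : (ι → Bool) → ℝ} {B : ℝ} (hsupp : ∃ x, 0 < w x)
    (h : ∀ x, 0 < w x → ip c x + logb 2 (w x) ≤ B) : wdelta c w ≤ B := by
  obtain ⟨x₀, hx₀⟩ := hsupp
  refine csSup_le ⟨_, x₀, hx₀, rfl⟩ ?_
  rintro y ⟨x, hx, rfl⟩
  exact h x hx

noncomputable def tilt (t : ℝ) (c : ι → Bool) (w : (ι → Bool) → ℝ) (x : ι → Bool) : ℝ :=
  w x * 2 ^ (t * ip c x)

lemma tilt_nonneg {w : (ι → Bool) → ℝ} (hw : ∀ x, 0 ≤ w x) (t : ℝ) (c x : ι → Bool) :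
    0 ≤ tilt t c w x :=
  mul_nonneg (hw x) (rpow_nonneg zero_le_two _)

lemma tilt_pos {w : (ι → Bool) → ℝ} {x : ι → Bool} (hx : 0 < w x) (t : ℝ) (c : ι → Bool) :
    0 < tilt t c w x :=
  mul_pos hx (rpow_pos_of_pos two_pos _)

lemma Zw_tilt_pos {w : (ι → Bool) → ℝ} (hw : ∀ x, 0 ≤ w x) (hsupp : ∃ x, 0 < w x) (t : ℝ)
    (c : ι → Bool) : 0 < Zw (tilt t c w) :=
  let ⟨x, hx⟩ := hsupp
  Zw_pos (tilt_nonneg hw t c) ⟨x, tilt_pos hx t c⟩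

lemma logb_tilt {w : (ι → Bool) → ℝ} {x : ι → Bool} (hx : 0 < w x) (t : ℝ) (c : ι → Bool) :
    logb 2 (tilt t c w x) = logb 2 (w x) + t * ip c x := by
  rw [tilt, logb_mul hx.ne' (rpow_pos_of_pos two_pos _).ne', logb_rpow two_pos one_lt_two.ne']

lemma expect_Zw_tilt (w : (ι → Bool) → ℝ) (t : ℝ) :
    𝔼 c, Zw (tilt t c w) = Zw w * ((2 ^ t + 2 ^ (-t)) / 2) ^ Fintype.card ι := by
  simp only [Zw, tilt, Fintype.expect_eq_sum_div_card]
  rw [sum_comm, sum_mul]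
  simp only [← mul_sum, sum_rpow_mul_ip two_pos, div_pow, Fintype.card_fun, Fintype.card_bool]
  push_cast
  rw [sum_div]
  simp only [mul_div_assoc]

lemma wdelta_rpow_le {w : (ι → Bool) → ℝ} (hw : ∀ x, 0 ≤ w x) (hsupp : ∃ x, 0 < w x)
    {lam gam : ℝ} (hlam : 0 < lam) (hgam : 0 < gam) (hlg : lam * gam ≤ 1) (c : ι → Bool) :
    wdelta c (fun x => w x ^ gam) ≤
      (1 / lam) * logb 2 (Zw (tilt lam c w)) + ((lam * gam - 1) / lam) * logb 2 (wmin w) := by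
  obtain ⟨x₀, hx₀⟩ := hsupp
  refine wdelta_le ⟨x₀, rpow_pos_of_pos hx₀ gam⟩ fun x hxgam => ?_
  have hx : 0 < w x := by
    refine (hw x).lt_of_ne fun h => ?_
    rw [← h, zero_rpow hgam.ne'] at hxgam
    exact hxgam.false
  have htilt := logb_tilt hx lam c ▸
    logb_le_logb_Zw (tilt_nonneg hw lam c) (tilt_pos hx lam c)
  have hmin : logb 2 (wmin w) ≤ logb 2 (w x) :=
    logb_le_logb_of_le one_lt_two (wmin_pos ⟨x₀, hx₀⟩) (wmin_le hx)
  have hweight := mul_le_mul_of_nonpos_left hmin (by linarith : lam * gam - 1 ≤ 0)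
  rw [logb_rpow_eq_mul_logb_of_pos hx, one_div_mul_eq_div, div_mul_eq_mul_div, ← add_div,
    le_div_iff₀ hlam]
  linarith

end Cube

theorem stmt2_general (n : ℕ) (w : (Fin n → Bool) → ℝ)
    (hw : ∀ x, 0 ≤ w x) (hsupp : ∃ x, 0 < w x)
    (lam gam : ℝ) (hlam : 0 < lam) (hgam : 0 < gam) (hlg : lam * gam ≤ 1) :
    wRad (fun x => w x ^ gam) ≤
      (1 / lam) * Real.logb 2 (Zw w) + ((lam * gam - 1) / lam) * Real.logb 2 (wmin w)
        + lam * n / 2 := by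
  set K := ((lam * gam - 1) / lam) * logb 2 (wmin w)
  have hq : 0 < ((2 : ℝ) ^ lam + 2 ^ (-lam)) / 2 := by positivity
  calc wRad (fun x => w x ^ gam)
      = 𝔼 c, wdelta c (fun x => w x ^ gam) := wRad_eq_expect _
    _ ≤ 𝔼 c, ((1 / lam) * logb 2 (Zw (tilt lam c w)) + K) :=
        expect_le_expect fun c _ => wdelta_rpow_le hw hsupp hlam hgam hlg c
    _ = (1 / lam) * 𝔼 c, logb 2 (Zw (tilt lam c w)) + K := by
        rw [expect_add_distrib, ← mul_expect, expect_const univ_nonempty]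
    _ ≤ (1 / lam) * logb 2 (𝔼 c, Zw (tilt lam c w)) + K := by
        gcongr
        exact expect_logb_le_logb_expect one_lt_two (Zw_tilt_pos hw hsupp lam)
    _ = (1 / lam) * (logb 2 (Zw w) + n * logb 2 (((2 : ℝ) ^ lam + 2 ^ (-lam)) / 2)) + K := by
        rw [expect_Zw_tilt, logb_mul (Zw_pos hw hsupp).ne' (pow_pos hq _).ne', logb_pow,
          Fintype.card_fin]
    _ ≤ (1 / lam) * (logb 2 (Zw w) + n * (lam ^ 2 / 2)) + K := by
        gcongr
        exact logb_two_rpow_add_rpow_neg_div_two_le lam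
    _ = _ := by field_simp; ring

theorem stmt2 (n : ℕ) (hn : 0 < n) (w : (Fin n → Bool) → ℝ)
    (hw : ∀ x, 0 ≤ w x) (hsupp : ∃ x, 0 < w x)
    (lam gam : ℝ) (hlam : 0 < lam) (hgam : 0 < gam) (hlg : lam * gam ≤ 1) :
    wRad (fun x => w x ^ gam) ≤
      (1 / lam) * Real.logb 2 (Zw w) + ((lam * gam - 1) / lam) * Real.logb 2 (wmin w)
        + lam * n / 2 :=
  stmt2_general n w hw hsupp lam gam hlam hgam hlg
end

section
/- Let n be a positive integer and w : {-1,1}^n → [0,∞) a weight function with nonempty support. For c sampled uniformly from {-1,1}^n, the two-sided bound R(w) − √(6n) ≤ δ(c,w) ≤ R(w) + √(6n) holds with probability at least 1 − 2·exp(−3) (which exceeds 0.90). -/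
/-!
The map `c ↦ δ(c, w)` is a maximum of functions `c ↦ ⟨c, x⟩ + log₂ w(x)`, each of which changes
by at most `2` when one coordinate of `c` is flipped; hence so does `δ(·, w)`. McDiarmid's
bounded-differences inequality on the uniform cube `{-1,1}^n` then gives
`P(|δ(c, w) - R(w)| ≥ t) ≤ 2 exp(-t² / (2n))`, which is `2 exp(-3)` at `t = √(6n)`.
The inequality is proved by bounding the moment generating function one coordinate at a time
(Hoeffding's lemma for a two-point distribution is `cosh x ≤ exp (x² / 2)`) and applying Markov's
inequality to `exp (L (f - E f))`.
-/

open Finset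

open Real

section Cube

variable {n : ℕ}

noncomputable def cubeMean (f : (Fin n → Bool) → ℝ) : ℝ := (∑ c, f c) / 2 ^ n

def BoundedDifferences (d : ℝ) (f : (Fin n → Bool) → ℝ) : Prop :=
  ∀ c i b, |f c - f (Function.update c i b)| ≤ d

lemma BoundedDifferences.neg {d : ℝ} {f : (Fin n → Bool) → ℝ} (hf : BoundedDifferences d f) :
    BoundedDifferences d (-f) := fun c i b => by
  simpa only [Pi.neg_apply, neg_sub_neg, abs_sub_comm] using hf c i b

lemma BoundedDifferences.comp_cons {d : ℝ} {f : (Fin (n + 1) → Bool) → ℝ}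
    (hf : BoundedDifferences d f) (b : Bool) :
    BoundedDifferences d (fun c => f (Fin.cons b c)) := fun c i b' => by
  simpa only [Fin.cons_update] using hf (Fin.cons b c) i.succ b'

lemma BoundedDifferences.abs_sub_cons_le {d : ℝ} {f : (Fin (n + 1) → Bool) → ℝ}
    (hf : BoundedDifferences d f) (c : Fin n → Bool) :
    |f (Fin.cons true c) - f (Fin.cons false c)| ≤ d := by
  simpa only [Fin.update_cons_zero] using hf (Fin.cons true c) 0 false

lemma sum_cube_succ {M : Type*} [AddCommMonoid M] (g : (Fin (n + 1) → Bool) → M) :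
    ∑ c, g c = ∑ c, g (Fin.cons true c) + ∑ c, g (Fin.cons false c) := by
  rw [← Fintype.sum_equiv (Fin.consEquiv fun _ => Bool) (fun p => g (Fin.cons p.1 p.2)) g
    (fun _ => rfl), Fintype.sum_prod_type, Fintype.sum_bool]

lemma cubeMean_succ (f : (Fin (n + 1) → Bool) → ℝ) :
    cubeMean f = (cubeMean (fun c => f (Fin.cons true c)) +
      cubeMean (fun c => f (Fin.cons false c))) / 2 := by
  simp only [cubeMean, sum_cube_succ f, pow_succ]
  ring

lemma abs_cubeMean_sub_cubeMean_le {d : ℝ} {g h : (Fin n → Bool) → ℝ}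
    (hgh : ∀ c, |g c - h c| ≤ d) : |cubeMean g - cubeMean h| ≤ d := by
  rw [cubeMean, cubeMean, ← sub_div, ← sum_sub_distrib, abs_div,
    abs_of_pos (by positivity : (0 : ℝ) < 2 ^ n), div_le_iff₀ (by positivity)]
  calc |∑ c, (g c - h c)| ≤ ∑ c, |g c - h c| := abs_sum_le_sum_abs _ _
    _ ≤ ∑ _c : Fin n → Bool, d := sum_le_sum fun c _ => hgh c
    _ = d * 2 ^ n := by simp [mul_comm]

lemma exp_add_exp_neg_le {a d L : ℝ} (ha : |a| ≤ d / 2) :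
    exp (L * a) + exp (-(L * a)) ≤ 2 * exp (L ^ 2 * d ^ 2 / 8) := by
  have hsq : (L * a) ^ 2 ≤ L ^ 2 * (d / 2) ^ 2 := by
    rw [mul_pow, ← sq_abs a]
    gcongr
  calc exp (L * a) + exp (-(L * a)) = 2 * cosh (L * a) := by rw [cosh_eq]; ring
    _ ≤ 2 * exp ((L * a) ^ 2 / 2) := by gcongr; exact cosh_le_exp_half_sq _
    _ ≤ 2 * exp (L ^ 2 * d ^ 2 / 8) := by gcongr 2 * exp ?_; linarith

theorem sum_exp_mul_sub_cubeMean_le {d : ℝ} (L : ℝ) :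
    ∀ {n : ℕ} {f : (Fin n → Bool) → ℝ}, BoundedDifferences d f →
      ∑ c, exp (L * (f c - cubeMean f)) ≤ 2 ^ n * exp (n * L ^ 2 * d ^ 2 / 8)
  | 0, f, _ => by simp [cubeMean]
  | n + 1, f, hf => by
    set g := fun b (c : Fin n → Bool) => f (Fin.cons b c)
    have ih b : ∑ c, exp (L * (g b c - cubeMean (g b))) ≤ 2 ^ n * exp (n * L ^ 2 * d ^ 2 / 8) :=
      sum_exp_mul_sub_cubeMean_le L (hf.comp_cons b)
    set a := (cubeMean (g true) - cubeMean (g false)) / 2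
    have ha : |a| ≤ d / 2 := by
      rw [abs_div, abs_two]
      gcongr
      exact abs_cubeMean_sub_cubeMean_le hf.abs_sub_cons_le
    have hmean : cubeMean f = (cubeMean (g true) + cubeMean (g false)) / 2 := cubeMean_succ f
    calc ∑ c, exp (L * (f c - cubeMean f))
        = (∑ c, exp (L * (g true c - cubeMean (g true)))) * exp (L * a)
          + (∑ c, exp (L * (g false c - cubeMean (g false)))) * exp (-(L * a)) := by
          simp only [sum_cube_succ (fun c => exp (L * (f c - cubeMean f))), sum_mul]
          congr 1 <;> refine sum_congr rfl fun c _ => ?_ <;>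
            rw [← exp_add, hmean] <;> congr 1 <;> ring
      _ ≤ 2 ^ n * exp (n * L ^ 2 * d ^ 2 / 8) * (exp (L * a) + exp (-(L * a))) := by
          rw [mul_add]; gcongr <;> exact ih _
      _ ≤ 2 ^ n * exp (n * L ^ 2 * d ^ 2 / 8) * (2 * exp (L ^ 2 * d ^ 2 / 8)) := by
          gcongr; exact exp_add_exp_neg_le ha
      _ = 2 ^ (n + 1) * exp ((n + 1 : ℕ) * L ^ 2 * d ^ 2 / 8) := by
          rw [mul_mul_mul_comm, ← exp_add, pow_succ]; push_cast; ring_nf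

lemma card_filter_le_mul_exp_le_sum_exp {α : Type*} (s : Finset α) (g : α → ℝ) {L : ℝ}
    (hL : 0 ≤ L) (t : ℝ) :
    (#{x ∈ s | t ≤ g x} : ℝ) * exp (L * t) ≤ ∑ x ∈ s, exp (L * g x) := by
  rw [← nsmul_eq_mul]
  calc #{x ∈ s | t ≤ g x} • exp (L * t) ≤ ∑ x ∈ s with t ≤ g x, exp (L * g x) :=
        card_nsmul_le_sum _ _ _ fun x hx => by gcongr; exact (mem_filter.1 hx).2
    _ ≤ ∑ x ∈ s, exp (L * g x) :=
        sum_le_sum_of_subset_of_nonneg (filter_subset _ _) fun _ _ _ => (exp_pos _).le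

theorem card_filter_le_sub_cubeMean_le (hn : 0 < n) {d t : ℝ} (hd : 0 < d) (ht : 0 ≤ t)
    {f : (Fin n → Bool) → ℝ} (hf : BoundedDifferences d f) :
    (#{c | t ≤ f c - cubeMean f} : ℝ) ≤ 2 ^ n * exp (-2 * t ^ 2 / (n * d ^ 2)) := by
  have hn' : (0 : ℝ) < n := by exact_mod_cast hn
  -- the Chernoff exponent `L t - n L² d² / 8` is maximal at this `L`
  set L := 4 * t / (n * d ^ 2)
  have hL : 0 ≤ L := by positivity
  have hmarkov := (card_filter_le_mul_exp_le_sum_exp univ (fun c => f c - cubeMean f) hL t).trans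
    (sum_exp_mul_sub_cubeMean_le L hf)
  have hexp : exp (n * L ^ 2 * d ^ 2 / 8) = exp (-2 * t ^ 2 / (n * d ^ 2)) * exp (L * t) := by
    rw [← exp_add]; congr 1; simp only [L]; field_simp; ring
  rw [hexp, ← mul_assoc] at hmarkov
  exact le_of_mul_le_mul_right hmarkov (exp_pos _)

theorem le_card_filter_abs_sub_cubeMean_le (hn : 0 < n) {d t : ℝ} (hd : 0 < d) (ht : 0 ≤ t)
    {f : (Fin n → Bool) → ℝ} (hf : BoundedDifferences d f) :
    2 ^ n * (1 - 2 * exp (-2 * t ^ 2 / (n * d ^ 2))) ≤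
      #{c | cubeMean f - t ≤ f c ∧ f c ≤ cubeMean f + t} := by
  have hneg : cubeMean (-f) = -cubeMean f := by simp [cubeMean, sum_neg_distrib, neg_div]
  have hupper := card_filter_le_sub_cubeMean_le hn hd ht hf
  have hlower := card_filter_le_sub_cubeMean_le hn hd ht hf.neg
  simp only [hneg, Pi.neg_apply, sub_neg_eq_add, neg_add_eq_sub] at hlower
  have hcover : univ ⊆ (univ.filter fun c => cubeMean f - t ≤ f c ∧ f c ≤ cubeMean f + t) ∪
      ((univ.filter fun c => t ≤ f c - cubeMean f) ∪
        univ.filter fun c => t ≤ cubeMean f - f c) := by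
    intro c _
    simp only [mem_union, mem_filter, mem_univ, true_and]
    by_contra! h
    linarith [h.1 (by linarith [h.2.1]), h.2.2]
  have hcard := (card_le_card hcover).trans
    ((card_union_le _ _).trans (Nat.add_le_add_left (card_union_le _ _) _))
  rw [card_univ, Fintype.card_fun, Fintype.card_bool, Fintype.card_fin] at hcard
  have hcard' := (Nat.cast_le (α := ℝ)).2 hcard
  push_cast at hcard'
  linarith

end Cube

section WeightedRademacher

variable {ι : Type*} [Fintype ι] [DecidableEq ι]

lemma abs_ip_sub_ip_update_le (c x : ι → Bool) (i : ι) (b : Bool) :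
    |ip c x - ip (Function.update c i b) x| ≤ 2 := by
  have hdiff : ip c x - ip (Function.update c i b) x = (sgn (c i) - sgn b) * sgn (x i) := by
    rw [ip, ip, ← sum_sub_distrib, sum_eq_single i (fun j _ hj => by simp [hj]) (by simp)]
    simp [sub_mul]
  rw [hdiff]
  cases c i <;> cases b <;> cases x i <;> norm_num [sgn]

lemma wdelta_le_wdelta_add {w : (ι → Bool) → ℝ} (hsupp : ∃ x, 0 < w x) {c c' : ι → Bool} {d : ℝ}
    (h : ∀ x, ip c x ≤ ip c' x + d) : wdelta c w ≤ wdelta c' w + d := by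
  obtain ⟨x₀, hx₀⟩ := hsupp
  have hbdd : BddAbove {y : ℝ | ∃ x, 0 < w x ∧ y = ip c' x + logb 2 (w x)} :=
    ((Set.finite_range fun x => ip c' x + logb 2 (w x)).subset
      (by rintro _ ⟨x, -, rfl⟩; exact ⟨x, rfl⟩)).bddAbove
  refine csSup_le ⟨_, x₀, hx₀, rfl⟩ fun y ⟨x, hx, hy⟩ => ?_
  have : ip c' x + logb 2 (w x) ≤ wdelta c' w := le_csSup hbdd ⟨x, hx, rfl⟩
  linarith [h x]

lemma abs_wdelta_sub_wdelta_le {w : (ι → Bool) → ℝ} (hsupp : ∃ x, 0 < w x) {c c' : ι → Bool}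
    {d : ℝ} (h : ∀ x, |ip c x - ip c' x| ≤ d) : |wdelta c w - wdelta c' w| ≤ d := by
  have h₁ := wdelta_le_wdelta_add hsupp (c := c) (c' := c') fun x => by
    linarith [(abs_le.1 (h x)).2]
  have h₂ := wdelta_le_wdelta_add hsupp (c := c') (c' := c) fun x => by
    linarith [(abs_le.1 (h x)).1]
  exact abs_le.2 ⟨by linarith, by linarith⟩

lemma boundedDifferences_wdelta {n : ℕ} {w : (Fin n → Bool) → ℝ} (hsupp : ∃ x, 0 < w x) :
    BoundedDifferences 2 (fun c => wdelta c w) := fun c i b =>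
  abs_wdelta_sub_wdelta_le hsupp fun x => abs_ip_sub_ip_update_le c x i b

end WeightedRademacher

theorem stmt5_general (n : ℕ) (hn : 0 < n) (w : (Fin n → Bool) → ℝ)
    (hsupp : ∃ x, 0 < w x) :
    ((Finset.univ.filter (fun c : Fin n → Bool =>
        wRad w - Real.sqrt (6 * n) ≤ wdelta c w ∧
        wdelta c w ≤ wRad w + Real.sqrt (6 * n))).card : ℝ) / 2 ^ n
      ≥ 1 - 2 * Real.exp (-3) := by
  have hmean : wRad w = cubeMean (fun c => wdelta c w) := by rw [wRad, Fintype.card_fin, cubeMean]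
  have hexponent : -2 * sqrt (6 * n) ^ 2 / (n * 2 ^ 2) = -3 := by
    rw [sq_sqrt (by positivity)]
    field_simp [(Nat.cast_pos.2 hn).ne']
    ring
  have h := le_card_filter_abs_sub_cubeMean_le hn two_pos (sqrt_nonneg (6 * n))
    (boundedDifferences_wdelta hsupp)
  rw [hexponent, ← hmean] at h
  rw [ge_iff_le, le_div_iff₀ (by positivity), mul_comm]
  exact h

theorem stmt5 (n : ℕ) (hn : 0 < n) (w : (Fin n → Bool) → ℝ)
    (hw : ∀ x, 0 ≤ w x) (hsupp : ∃ x, 0 < w x) :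
    ((Finset.univ.filter (fun c : Fin n → Bool =>
        wRad w - Real.sqrt (6 * n) ≤ wdelta c w ∧
        wdelta c w ≤ wRad w + Real.sqrt (6 * n))).card : ℝ) / 2 ^ n
      ≥ 1 - 2 * Real.exp (-3) :=
  stmt5_general n hn w hsupp
end

section
/- Let j ≥ 1 be an integer and w : {-1,1}^j → [0,∞) a weight function with nonempty support. Define w⁺ : {-1,1}^{j−1} → [0,∞) by w⁺(x) = w(x,1) and w⁻ : {-1,1}^{j−1} → [0,∞) by w⁻(x) = w(x,−1). If w⁺ has nonempty support then R(w⁺) ≤ R(w), and if w⁻ has nonempty support then R(w⁻) ≤ R(w). -/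
open Finset

/-!
Write `w_b(x) = w(x,b)`. Every `x` in the support of `w_b` gives `(x,b)` in the support of `w`,
and `⟨(c,b'),(x,b)⟩ = ⟨c,x⟩ + b'b`, so `δ(c,w_b) + b'b ≤ δ((c,b'),w)` for both signs `b'`.
Adding the two inequalities cancels `±b`: `2 δ(c,w_b) ≤ δ((c,1),w) + δ((c,-1),w)`, and averaging
over `c` gives `R(w_b) ≤ R(w)`.
-/

lemma sum_pi_fin_succ_eq_sum_snoc {α M : Type*} [Fintype α] [AddCommMonoid M] {m : ℕ}
    (f : (Fin (m + 1) → α) → M) :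
    ∑ c, f c = ∑ b, ∑ c : Fin m → α, f (Fin.snoc c b) := by
  rw [← Fintype.sum_prod_type']
  exact (Fintype.sum_equiv (Fin.snocEquiv fun _ => α) _ f fun _ => rfl).symm

lemma sgn_true_add_sgn_false : sgn true + sgn false = 0 := by
  norm_num [sgn]

lemma ip_snoc {m : ℕ} (c x : Fin m → Bool) (b' b : Bool) :
    ip (Fin.snoc c b' : Fin (m + 1) → Bool) (Fin.snoc x b) = ip c x + sgn b' * sgn b := by
  simp [ip, Fin.sum_univ_castSucc]

lemma le_wdelta {ι : Type*} [Fintype ι] [DecidableEq ι] (c : ι → Bool)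
    {w : (ι → Bool) → ℝ} {x : ι → Bool} (hx : 0 < w x) :
    ip c x + Real.logb 2 (w x) ≤ wdelta c w := by
  refine le_csSup ((Set.finite_range fun x => ip c x + Real.logb 2 (w x)).subset ?_).bddAbove
    ⟨x, hx, rfl⟩
  rintro y ⟨x, -, rfl⟩
  exact ⟨x, rfl⟩

section Slice

variable {m : ℕ} {w : (Fin (m + 1) → Bool) → ℝ} {b : Bool}

lemma wdelta_slice_add_le (hb : ∃ x : Fin m → Bool, 0 < w (Fin.snoc x b))
    (c : Fin m → Bool) (b' : Bool) :
    wdelta c (fun x => w (Fin.snoc x b)) + sgn b' * sgn b ≤ wdelta (Fin.snoc c b') w := by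
  rw [← le_sub_iff_add_le]
  obtain ⟨x₀, hx₀⟩ := hb
  refine csSup_le ⟨_, x₀, hx₀, rfl⟩ ?_
  rintro y ⟨x, hx, rfl⟩
  have := le_wdelta (Fin.snoc c b') hx
  rw [ip_snoc] at this
  linarith

lemma two_mul_wdelta_slice_le (hb : ∃ x : Fin m → Bool, 0 < w (Fin.snoc x b))
    (c : Fin m → Bool) :
    2 * wdelta c (fun x => w (Fin.snoc x b)) ≤
      wdelta (Fin.snoc c true) w + wdelta (Fin.snoc c false) w := by
  have h_true := wdelta_slice_add_le hb c true
  have h_false := wdelta_slice_add_le hb c false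
  have h_cancel : sgn true * sgn b + sgn false * sgn b = 0 := by
    rw [← add_mul, sgn_true_add_sgn_false, zero_mul]
  linarith

lemma wRad_slice_le (hb : ∃ x : Fin m → Bool, 0 < w (Fin.snoc x b)) :
    wRad (fun x : Fin m → Bool => w (Fin.snoc x b)) ≤ wRad w := by
  have h_sum : 2 * ∑ c : Fin m → Bool, wdelta c (fun x => w (Fin.snoc x b)) ≤
      ∑ c : Fin (m + 1) → Bool, wdelta c w := by
    rw [sum_pi_fin_succ_eq_sum_snoc, Fintype.sum_bool, ← Finset.sum_add_distrib, Finset.mul_sum]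
    exact Finset.sum_le_sum fun c _ => two_mul_wdelta_slice_le hb c
  simp only [wRad, Fintype.card_fin]
  rw [div_le_div_iff₀ (by positivity) (by positivity), pow_succ]
  nlinarith [pow_pos (two_pos : (0 : ℝ) < 2) m]

end Slice

theorem stmt10_general (m : ℕ) (w : (Fin (m + 1) → Bool) → ℝ) :
    ((∃ x : Fin m → Bool, 0 < w (Fin.snoc x true)) →
      wRad (fun x : Fin m → Bool => w (Fin.snoc x true)) ≤ wRad w) ∧
    ((∃ x : Fin m → Bool, 0 < w (Fin.snoc x false)) →
      wRad (fun x : Fin m → Bool => w (Fin.snoc x false)) ≤ wRad w) :=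
  ⟨wRad_slice_le, wRad_slice_le⟩

theorem stmt10 (m : ℕ) (w : (Fin (m + 1) → Bool) → ℝ)
    (hw : ∀ x, 0 ≤ w x) (hsupp : ∃ x, 0 < w x) :
    ((∃ x : Fin m → Bool, 0 < w (Fin.snoc x true)) →
      wRad (fun x : Fin m → Bool => w (Fin.snoc x true)) ≤ wRad w) ∧
    ((∃ x : Fin m → Bool, 0 < w (Fin.snoc x false)) →
      wRad (fun x : Fin m → Bool => w (Fin.snoc x false)) ≤ wRad w) :=
  stmt10_general m w
end
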